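/- arXiv:2001.07482 — 3 statements merged into one kernel-verified Lean document; each statement's English description precedes it below -/
import Mathlib

section
/- Let $(u_j)$ and $(v_j)$ be non-increasing sequences of positive real numbers. If $\prod_{j=1}^n u_j \le \prod_{j=1}^n v_j$ for all $n \ge 1$, then for every $p > 0$ and every $n \ge 1$, $\sum_{j=1}^n u_j^p \le \sum_{j=1}^n v_j^p$. -/
/-!
Put `x j = p log u j` and `y j = p log v j`: then `x` is antitone and its partial sums are
dominated by those of `y`. The tangent-line bound `eˣ - eʸ ≤ eˣ (x - y)` reduces
`∑ (e^{x j} - e^{y j}) ≤ 0` to `∑ e^{x j} (x j - y j) ≤ 0`, which is Abel summation against the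
antitone nonnegative weights `e^{x j}`.
-/

open Finset Real

theorem Finset.sum_range_mul_nonpos_of_antitone {w d : ℕ → ℝ} (hw : Antitone w)
    (hw₀ : ∀ j, 0 ≤ w j) (hd : ∀ k, ∑ j ∈ range k, d j ≤ 0) (n : ℕ) :
    ∑ j ∈ range n, w j * d j ≤ 0 := by
  simp only [← smul_eq_mul]
  rw [sum_range_by_parts]
  have hlast : w (n - 1) • ∑ j ∈ range n, d j ≤ 0 := mul_nonpos_of_nonneg_of_nonpos (hw₀ _) (hd n)
  have hsteps : 0 ≤ ∑ i ∈ range (n - 1), (w (i + 1) - w i) • ∑ j ∈ range (i + 1), d j :=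
    sum_nonneg fun i _ ↦ mul_nonneg_of_nonpos_of_nonpos (sub_nonpos.2 (hw i.le_succ)) (hd _)
  linarith

theorem Real.exp_sub_exp_le_exp_mul_sub (x y : ℝ) : exp x - exp y ≤ exp x * (x - y) := by
  have h := mul_le_mul_of_nonneg_left (add_one_le_exp (y - x)) (exp_pos x).le
  rw [← exp_add, add_sub_cancel] at h
  linarith

theorem Real.sum_range_exp_le_of_antitone_of_sum_le {x y : ℕ → ℝ} (hx : Antitone x)
    (hxy : ∀ k, ∑ j ∈ range k, x j ≤ ∑ j ∈ range k, y j) (n : ℕ) :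
    ∑ j ∈ range n, exp (x j) ≤ ∑ j ∈ range n, exp (y j) := by
  have habel : ∑ j ∈ range n, exp (x j) * (x j - y j) ≤ 0 :=
    sum_range_mul_nonpos_of_antitone (exp_monotone.comp_antitone hx) (fun j ↦ (exp_pos _).le)
      (fun k ↦ by simpa [sum_sub_distrib] using hxy k) n
  have htangent : ∑ j ∈ range n, (exp (x j) - exp (y j)) ≤ ∑ j ∈ range n, exp (x j) * (x j - y j) :=
    sum_le_sum fun j _ ↦ exp_sub_exp_le_exp_mul_sub _ _
  rw [sum_sub_distrib] at htangent
  linarith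

theorem stmt_1_general (u v : ℕ → ℝ) (hu : Antitone u)
    (hupos : ∀ j, 0 < u j) (hvpos : ∀ j, 0 < v j)
    (hlog : ∀ n, 1 ≤ n → ∏ j ∈ Finset.Icc 1 n, u j ≤ ∏ j ∈ Finset.Icc 1 n, v j) :
    ∀ p : ℝ, 0 < p → ∀ n, 1 ≤ n →
      ∑ j ∈ Finset.Icc 1 n, u j ^ p ≤ ∑ j ∈ Finset.Icc 1 n, v j ^ p := by
  intro p hp n _
  have hIcc (f : ℕ → ℝ) (m : ℕ) : ∑ j ∈ Icc 1 m, f j = ∑ j ∈ range m, f (j + 1) := by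
    rw [range_eq_Ico, sum_Ico_add']
    rfl
  have hsum_log (k : ℕ) : ∑ j ∈ range k, log (u (j + 1)) ≤ ∑ j ∈ range k, log (v (j + 1)) := by
    rcases Nat.eq_zero_or_pos k with rfl | hk
    · simp
    rw [← log_prod fun j _ ↦ (hupos _).ne', ← log_prod fun j _ ↦ (hvpos _).ne']
    refine log_le_log (prod_pos fun j _ ↦ hupos _) ?_
    rw [range_eq_Ico, prod_Ico_add', prod_Ico_add']
    exact hlog k hk
  have hanti : Antitone fun j ↦ log (u (j + 1)) * p := fun i j hij ↦
    mul_le_mul_of_nonneg_right (log_le_log (hupos _) (hu (by omega))) hp.le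
  have key := sum_range_exp_le_of_antitone_of_sum_le hanti (y := fun j ↦ log (v (j + 1)) * p)
    (fun k ↦ by simpa only [← sum_mul] using mul_le_mul_of_nonneg_right (hsum_log k) hp.le) n
  simpa only [hIcc, rpow_def_of_pos (hupos _), rpow_def_of_pos (hvpos _)] using key

theorem stmt_1 (u v : ℕ → ℝ) (hu : Antitone u) (hv : Antitone v)
    (hupos : ∀ j, 0 < u j) (hvpos : ∀ j, 0 < v j)
    (hlog : ∀ n, 1 ≤ n → ∏ j ∈ Finset.Icc 1 n, u j ≤ ∏ j ∈ Finset.Icc 1 n, v j) :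
    ∀ p : ℝ, 0 < p → ∀ n, 1 ≤ n →
      ∑ j ∈ Finset.Icc 1 n, u j ^ p ≤ ∑ j ∈ Finset.Icc 1 n, v j ^ p :=
  stmt_1_general u v hu hupos hvpos hlog
end

section
/- Let $T$ be a compact operator on a separable complex Hilbert space $H$ with Schmidt decomposition $T = \sum_{j=1}^\infty s_j\, u_j \otimes v_j$, where $s_1 \ge s_2 \ge \cdots \ge 0$ are the singular numbers of $T$. Then for every $n \ge 1$, $s_1 \cdots s_n = \max |\det(\langle T f_j, g_i\rangle)_{1 \le i,j \le n}|$, where the maximum is taken over all pairs $(f_j)_{1 \le j \le n}$, $(g_i)_{1 \le i \le n}$ of orthonormal systems of length $n$ in $H$. -/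
/-!
Truncating the Schmidt series after `N` terms writes the matrix `(⟪g i, T f j⟫)` as the limit of
`Uᴴ D V`, where `D = diag (s 0, …, s (N-1))` and `U`, `V` are the `N × n` matrices `(⟪u k, g i⟫)`
and `(⟪v k, f j⟫)`. Bessel's inequality makes `U` and `V` contractions, so by Cauchy–Binet the
squared maximal minors of each sum to `det (Uᴴ U) ≤ 1`. Cauchy–Binet applied to `Uᴴ (D V)` then
bounds `|det (Uᴴ D V)|` by `s 0 ⋯ s (n-1) · ∑ |det U_S| |det V_S| ≤ s 0 ⋯ s (n-1)`.
The bound is attained at `f = v`, `g = u`, where the matrix is diagonal.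
-/

open Finset Matrix Filter Topology Equiv
open scoped InnerProductSpace

theorem Fin.val_le_val_of_strictMono {n N : ℕ} {m : Fin n → Fin N} (hm : StrictMono m)
    (i : Fin n) : (i : ℕ) ≤ m i := by
  obtain ⟨i, hi⟩ := i
  induction i with
  | zero => exact Nat.zero_le _
  | succ i ih =>
    have hlt := hm (show (⟨i, by omega⟩ : Fin n) < ⟨i + 1, hi⟩ from Fin.mk_lt_mk.mpr i.lt_succ_self)
    have := ih (by omega)
    simp only [Fin.lt_def] at hlt this ⊢
    omega

theorem Antitone.prod_comp_le_prod_range {n N : ℕ} {s : ℕ → ℝ} (hs0 : ∀ j, 0 ≤ s j)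
    (hs : Antitone s) {m : Fin n → Fin N} (hm : StrictMono m) :
    ∏ i, s (m i) ≤ ∏ j ∈ range n, s j := by
  rw [← Fin.prod_univ_eq_prod_range]
  exact prod_le_prod (fun i _ => hs0 _) fun i _ => hs (Fin.val_le_val_of_strictMono hm i)

theorem Finset.sum_mul_le_one_of_sum_sq_le_one {ι : Type*} {S : Finset ι} {a b : ι → ℝ}
    (ha : ∑ i ∈ S, a i ^ 2 ≤ 1) (hb : ∑ i ∈ S, b i ^ 2 ≤ 1) : ∑ i ∈ S, a i * b i ≤ 1 := by
  have h := sum_le_sum fun i (_ : i ∈ S) => two_mul_le_add_sq (a i) (b i)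
  simp only [mul_assoc, ← mul_sum, sum_add_distrib] at h
  linarith

theorem Finset.sum_injective_eq_sum_strictMono_perm {κ M : Type*} [Fintype κ] [LinearOrder κ]
    [AddCommMonoid M] {n : ℕ} (F : (Fin n → κ) → M) :
    ∑ p : Fin n → κ with p.Injective, F p =
      ∑ m : Fin n → κ with StrictMono m, ∑ σ : Perm (Fin n), F (m ∘ σ) := by
  rw [← sum_product']
  symm
  refine sum_nbij' (fun mσ => mσ.1 ∘ mσ.2) (fun p => (p ∘ Tuple.sort p, (Tuple.sort p)⁻¹))
    ?_ ?_ ?_ ?_ fun _ _ => rfl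
  · rintro ⟨m, σ⟩ h
    simp only [mem_product, mem_filter_univ, mem_univ, and_true] at h
    simpa using h.injective.comp σ.injective
  · intro p hp
    simp only [mem_filter_univ] at hp
    simpa using (Tuple.monotone_sort p).strictMono_of_injective (hp.comp (Tuple.sort p).injective)
  · rintro ⟨m, σ⟩ h
    replace h : StrictMono m := by simpa using h
    have hsorted : (m ∘ σ) ∘ Tuple.sort (m ∘ σ) = m := by
      rw [Tuple.comp_perm_comp_sort_eq_comp_sort, Tuple.sort_eq_refl_iff_monotone.mpr h.monotone]
      rfl
    have hσ : σ * Tuple.sort (m ∘ σ) = 1 := by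
      ext i
      exact congrArg Fin.val (h.injective (congrFun hsorted i))
    exact Prod.ext hsorted (inv_eq_of_mul_eq_one_left hσ)
  · intro p _
    ext i
    simp

namespace Matrix

section CauchyBinet

variable {R κ : Type*} [CommRing R] [Fintype κ] {n : ℕ}

theorem det_mul_eq_sum_det_submatrix_mul_prod (B : Matrix (Fin n) κ R) (C : Matrix κ (Fin n) R) :
    (B * C).det = ∑ p : Fin n → κ, (B.submatrix id p).det * ∏ i, C (p i) i := by
  simp only [det_apply', mul_apply, prod_univ_sum, Fintype.piFinset_univ, sum_mul, mul_sum,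
    submatrix_apply, id_eq, prod_mul_distrib, mul_assoc]
  exact sum_comm

theorem det_mul_eq_sum_strictMono [LinearOrder κ] (B : Matrix (Fin n) κ R)
    (C : Matrix κ (Fin n) R) :
    (B * C).det = ∑ m : Fin n → κ with StrictMono m,
      (B.submatrix id m).det * (C.submatrix m id).det := by
  classical
  have hinj : ∀ p : Fin n → κ, ¬ p.Injective → (B.submatrix id p).det = 0 := by
    intro p hp
    obtain ⟨i, j, hij, hne⟩ := Function.not_injective_iff.mp hp
    exact det_zero_of_column_eq hne fun k => by simp [hij]
  rw [det_mul_eq_sum_det_submatrix_mul_prod, ← sum_subset (filter_subset _ univ)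
    fun p _ hp => by rw [hinj p (by simpa using hp), zero_mul],
    sum_injective_eq_sum_strictMono_perm]
  refine sum_congr rfl fun m _ => ?_
  have hperm : ∀ σ : Perm (Fin n),
      (B.submatrix id (m ∘ σ)).det = Perm.sign σ * (B.submatrix id m).det := fun σ => by
    rw [← det_permute', submatrix_submatrix, Function.comp_id]
  simp only [hperm, det_apply (C.submatrix m id), mul_sum, mul_assoc, Units.smul_def,
    zsmul_eq_mul, submatrix_apply, id_eq, Function.comp_apply]
  exact sum_congr rfl fun σ _ => by ring

end CauchyBinet

section Contraction

variable {𝕜 ι κ : Type*} [RCLike 𝕜] [Fintype ι] [Fintype κ]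

def IsContraction (X : Matrix κ ι 𝕜) : Prop :=
  ∀ x : ι → 𝕜, ∑ k, ‖(X *ᵥ x) k‖ ^ 2 ≤ ∑ j, ‖x j‖ ^ 2

theorem re_star_dotProduct_self (w : κ → 𝕜) : RCLike.re (star w ⬝ᵥ w) = ∑ k, ‖w k‖ ^ 2 := by
  simp only [dotProduct, Pi.star_apply, RCLike.star_def, RCLike.conj_mul, map_sum]
  norm_cast

theorem re_star_dotProduct_conjTranspose_mul_self_mulVec (X : Matrix κ ι 𝕜) (x : ι → 𝕜) :
    RCLike.re (star x ⬝ᵥ (Xᴴ * X) *ᵥ x) = ∑ k, ‖(X *ᵥ x) k‖ ^ 2 := by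
  rw [← mulVec_mulVec, dotProduct_mulVec, ← star_mulVec, re_star_dotProduct_self]

theorem IsContraction.re_det_conjTranspose_mul_self_le_one [DecidableEq ι] {X : Matrix κ ι 𝕜}
    (hX : X.IsContraction) : RCLike.re (Xᴴ * X).det ≤ 1 := by
  have hH := isHermitian_conjTranspose_mul_self X
  have heig : ∀ i, hH.eigenvalues i ≤ 1 := fun i => by
    rw [hH.eigenvalues_eq, re_star_dotProduct_conjTranspose_mul_self_mulVec]
    refine (hX _).trans_eq ?_
    simp [← EuclideanSpace.norm_sq_eq, hH.eigenvectorBasis.orthonormal.1 i]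
  rw [hH.det_eq_prod_eigenvalues, ← RCLike.ofReal_prod, RCLike.ofReal_re]
  exact prod_le_one (fun i _ => eigenvalues_conjTranspose_mul_self_nonneg X i) fun i _ => heig i

theorem IsContraction.sum_norm_sq_det_submatrix_le_one [LinearOrder κ] {n : ℕ}
    {X : Matrix κ (Fin n) 𝕜} (hX : X.IsContraction) :
    ∑ m : Fin n → κ with StrictMono m, ‖(X.submatrix m id).det‖ ^ 2 ≤ 1 := by
  have hsum : (Xᴴ * X).det = ∑ m : Fin n → κ with StrictMono m,
      ((‖(X.submatrix m id).det‖ ^ 2 : ℝ) : 𝕜) := by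
    rw [det_mul_eq_sum_strictMono]
    refine sum_congr rfl fun m _ => ?_
    rw [← conjTranspose_submatrix, det_conjTranspose, RCLike.star_def, RCLike.conj_mul]
    norm_cast
  have := hX.re_det_conjTranspose_mul_self_le_one
  rwa [hsum, ← RCLike.ofReal_sum, RCLike.ofReal_re] at this

theorem norm_det_conjTranspose_mul_diagonal_mul_le {N n : ℕ} {s : ℕ → ℝ} (hs0 : ∀ j, 0 ≤ s j)
    (hs : Antitone s) {X Y : Matrix (Fin N) (Fin n) 𝕜} (hX : X.IsContraction)
    (hY : Y.IsContraction) :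
    ‖(Xᴴ * diagonal (fun k : Fin N => (s k : 𝕜)) * Y).det‖ ≤ ∏ j ∈ range n, s j := by
  set D : Matrix (Fin N) (Fin N) 𝕜 := diagonal fun k => (s k : 𝕜) with hD
  have hminor : ∀ m : Fin n → Fin N,
      (D * Y).submatrix m id = diagonal (fun i => (s (m i) : 𝕜)) * Y.submatrix m id := fun m => by
    ext i j
    simp [hD]
  have hP : 0 ≤ ∏ j ∈ range n, s j := prod_nonneg fun j _ => hs0 j
  rw [Matrix.mul_assoc, det_mul_eq_sum_strictMono]
  calc _ ≤ ∑ m : Fin n → Fin N with StrictMono m,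
        ‖(Xᴴ.submatrix id m).det * ((D * Y).submatrix m id).det‖ := norm_sum_le _ _
    _ ≤ ∑ m : Fin n → Fin N with StrictMono m, (∏ j ∈ range n, s j) *
        (‖(X.submatrix m id).det‖ * ‖(Y.submatrix m id).det‖) := by
      refine sum_le_sum fun m hm => ?_
      rw [hminor, det_mul, det_diagonal, ← conjTranspose_submatrix, det_conjTranspose, norm_mul,
        norm_mul, norm_star, norm_prod, mul_left_comm]
      refine mul_le_mul_of_nonneg_right ?_ (by positivity)
      simp_rw [RCLike.norm_ofReal, abs_of_nonneg (hs0 _)]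
      exact hs.prod_comp_le_prod_range hs0 (mem_filter.mp hm).2
    _ ≤ ∏ j ∈ range n, s j := by
      rw [← mul_sum]
      exact mul_le_of_le_one_right hP (sum_mul_le_one_of_sum_sq_le_one
        hX.sum_norm_sq_det_submatrix_le_one hY.sum_norm_sq_det_submatrix_le_one)

end Contraction

end Matrix

section InnerMatrix

variable {𝕜 E ι κ : Type*} [RCLike 𝕜] [NormedAddCommGroup E] [InnerProductSpace 𝕜 E]

variable (𝕜) in
def innerMatrix (e : κ → E) (f : ι → E) : Matrix κ ι 𝕜 :=
  Matrix.of fun k j => ⟪e k, f j⟫_𝕜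

theorem innerMatrix_conjTranspose (e : κ → E) (f : ι → E) :
    (innerMatrix 𝕜 e f)ᴴ = innerMatrix 𝕜 f e := by
  ext i k
  simp [innerMatrix]

theorem Orthonormal.isContraction_innerMatrix [Fintype ι] [Fintype κ] {e : κ → E}
    {f : ι → E} (he : Orthonormal 𝕜 e) (hf : Orthonormal 𝕜 f) :
    (innerMatrix 𝕜 e f).IsContraction := by
  intro x
  have hmulVec : ∀ k, (innerMatrix 𝕜 e f *ᵥ x) k = ⟪e k, ∑ j, x j • f j⟫_𝕜 := fun k => by
    simp [innerMatrix, mulVec, dotProduct, inner_sum, inner_smul_right, mul_comm]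
  have hnorm : ‖∑ j, x j • f j‖ ^ 2 = ∑ j, ‖x j‖ ^ 2 := by
    rw [← re_star_dotProduct_self, ← inner_self_eq_norm_sq (𝕜 := 𝕜), hf.inner_sum]
    rfl
  simp_rw [hmulVec, ← hnorm]
  exact he.sum_inner_products_le _

theorem Orthonormal.hasSum_inner_mul_inner [CompleteSpace E] {u v : ι → E}
    (hu : Orthonormal 𝕜 u) (hv : Orthonormal 𝕜 v) {c : ι → 𝕜} {C : ℝ} (hc : ∀ k, ‖c k‖ ≤ C)
    (x y : E) :
    HasSum (fun k => ⟪y, u k⟫_𝕜 * c k * ⟪v k, x⟫_𝕜) ⟪y, ∑' k, c k • ⟪v k, x⟫_𝕜 • u k⟫_𝕜 := by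
  have hsq : Summable fun k => ‖c k * ⟪v k, x⟫_𝕜‖ ^ 2 := by
    refine ((hv.inner_products_summable x).mul_left (C ^ 2)).of_nonneg_of_le
      (fun k => sq_nonneg _) fun k => ?_
    rw [norm_mul, mul_pow]
    gcongr
    exact hc k
  have hsum : Summable fun k => c k • ⟪v k, x⟫_𝕜 • u k := by
    simp_rw [smul_smul]
    simpa using (hu.orthogonalFamily.summable_iff_norm_sq_summable _).mpr hsq
  simpa [inner_smul_right, mul_assoc, mul_comm, mul_left_comm] using
    hsum.hasSum.mapL (innerSL 𝕜 y)

theorem tendsto_innerMatrix_truncation [CompleteSpace E] [Fintype ι] {u v : ℕ → E}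
    (hu : Orthonormal 𝕜 u) (hv : Orthonormal 𝕜 v) {c : ℕ → 𝕜} {C : ℝ} (hc : ∀ k, ‖c k‖ ≤ C)
    (f g : ι → E) :
    Tendsto (fun N => (innerMatrix 𝕜 (fun k : Fin N => u k) g)ᴴ *
        diagonal (fun k : Fin N => c k) * innerMatrix 𝕜 (fun k : Fin N => v k) f) atTop
      (𝓝 (innerMatrix 𝕜 g fun j => ∑' k, c k • ⟪v k, f j⟫_𝕜 • u k)) := by
  refine tendsto_pi_nhds.mpr fun i => tendsto_pi_nhds.mpr fun j => ?_
  have hentry : ∀ N, ((innerMatrix 𝕜 (fun k : Fin N => u k) g)ᴴ *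
      diagonal (fun k : Fin N => c k) * innerMatrix 𝕜 (fun k : Fin N => v k) f) i j =
      ∑ k ∈ range N, ⟪g i, u k⟫_𝕜 * c k * ⟪v k, f j⟫_𝕜 := fun N => by
    rw [innerMatrix_conjTranspose, mul_apply, ← Fin.sum_univ_eq_sum_range
      (fun k => ⟪g i, u k⟫_𝕜 * c k * ⟪v k, f j⟫_𝕜)]
    simp only [mul_diagonal, innerMatrix, of_apply]
  simp_rw [hentry]
  exact (hu.hasSum_inner_mul_inner hv hc (f j) (g i)).tendsto_sum_nat

theorem Orthonormal.tsum_smul_inner_smul_eq {u v : ι → E} (hv : Orthonormal 𝕜 v) (c : ι → 𝕜)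
    (j : ι) : ∑' k, c k • ⟪v k, v j⟫_𝕜 • u k = c j • u j := by
  rw [tsum_eq_single j fun k hk => by rw [hv.inner_eq_zero hk, zero_smul, smul_zero],
    inner_self_eq_norm_sq_to_K, hv.norm_eq_one, RCLike.ofReal_one, one_pow, one_smul]

end InnerMatrix

theorem stmt_5_general {H : Type*} [NormedAddCommGroup H] [InnerProductSpace ℂ H]
    [CompleteSpace H]
    (T : H →L[ℂ] H)
    (s : ℕ → ℝ) (hs_nonneg : ∀ j, 0 ≤ s j) (hs_anti : Antitone s)
    (u v : ℕ → H) (hu : Orthonormal ℂ u) (hv : Orthonormal ℂ v)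
    (hSchmidt : ∀ x : H, T x = ∑' j : ℕ, (s j : ℂ) • (⟪v j, x⟫_ℂ • u j))
    (n : ℕ) :
    IsGreatest
      {r : ℝ | ∃ f g : Fin n → H, Orthonormal ℂ f ∧ Orthonormal ℂ g ∧
        r = ‖Matrix.det (Matrix.of fun i j : Fin n => ⟪g i, T (f j)⟫_ℂ)‖}
      (∏ j ∈ Finset.range n, s j) := by
  have hu_fin : ∀ N, Orthonormal ℂ fun k : Fin N => u k := fun _ => hu.comp _ Fin.val_injective
  have hv_fin : ∀ N, Orthonormal ℂ fun k : Fin N => v k := fun _ => hv.comp _ Fin.val_injective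
  refine ⟨⟨_, _, hv_fin n, hu_fin n, ?_⟩, ?_⟩
  · have hdiag : (Matrix.of fun i j : Fin n => ⟪u i, T (v j)⟫_ℂ) =
        diagonal fun i : Fin n => (s i : ℂ) := by
      ext i j
      rw [of_apply, hSchmidt, hv.tsum_smul_inner_smul_eq, inner_smul_right,
        orthonormal_iff_ite.mp hu]
      by_cases hij : i = j
      · simp [hij]
      · simp [hij, Fin.val_inj]
    rw [hdiag, det_diagonal, norm_prod, ← Fin.prod_univ_eq_prod_range]
    simp [abs_of_nonneg (hs_nonneg _)]
  · rintro r ⟨f, g, hf, hg, rfl⟩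
    have hc : ∀ k, ‖(s k : ℂ)‖ ≤ s 0 := fun k => by
      rw [Complex.norm_real, Real.norm_of_nonneg (hs_nonneg k)]
      exact hs_anti (Nat.zero_le k)
    have hlim := tendsto_innerMatrix_truncation hu hv hc f g
    simp_rw [← hSchmidt] at hlim
    exact le_of_tendsto' ((continuous_norm.comp continuous_id.matrix_det).tendsto _ |>.comp hlim)
      fun N => norm_det_conjTranspose_mul_diagonal_mul_le hs_nonneg hs_anti
        ((hu_fin N).isContraction_innerMatrix hg) ((hv_fin N).isContraction_innerMatrix hf)

theorem stmt_5 {H : Type*} [NormedAddCommGroup H] [InnerProductSpace ℂ H]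
    [CompleteSpace H] [SecondCountableTopology H]
    (T : H →L[ℂ] H) (hT : IsCompactOperator ⇑T)
    (s : ℕ → ℝ) (hs_nonneg : ∀ j, 0 ≤ s j) (hs_anti : Antitone s)
    (hs_lim : Filter.Tendsto s Filter.atTop (nhds 0))
    (u v : ℕ → H) (hu : Orthonormal ℂ u) (hv : Orthonormal ℂ v)
    (hSchmidt : ∀ x : H, T x = ∑' j : ℕ, (s j : ℂ) • (⟪v j, x⟫_ℂ • u j))
    (n : ℕ) (hn : 1 ≤ n) :
    IsGreatest
      {r : ℝ | ∃ f g : Fin n → H, Orthonormal ℂ f ∧ Orthonormal ℂ g ∧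
        r = ‖Matrix.det (Matrix.of fun i j : Fin n => ⟪g i, T (f j)⟫_ℂ)‖}
      (∏ j ∈ Finset.range n, s j) :=
  stmt_5_general T s hs_nonneg hs_anti u v hu hv hSchmidt n
end

section
/- Let $\beta_n = \exp(-\sqrt{n})$ and $S(\varepsilon) = \sum_{n=0}^\infty e^{-2n\varepsilon} e^{\sqrt{n}}$ for $\varepsilon > 0$. Then there exist constants $c, C > 0$ such that for all sufficiently small $\varepsilon > 0$: $c\, \varepsilon^{-3/2} \exp\big(\frac{1}{8\varepsilon}\big) \le S(\varepsilon) \le C\, \varepsilon^{-3/2} \exp\big(\frac{1}{8\varepsilon}\big)$. -/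
/-!
Completing the square, `√n - 2εn = 1/(8ε) - 2ε(√n - a)²` with `a = 1/(4ε)`, so every term is
`exp (1/(8ε))` times a Gaussian in `√n` centred at `a`. Since `n - a² ≈ 2a(√n - a)`, in the
variable `n` this bump has width `ε^(-3/2)` around `a²`: the `⌊ε^(-3/2)⌋` terms with
`a² ≤ n ≤ a² + ε^(-3/2)` are each at least `exp (1/(8ε) - 8)`, while every term is at most
`exp (1/(8ε) + 1 - 4ε^(3/2) |n - a²|)`, a two-sided geometric sequence with sum `O(ε^(-3/2))`.
-/

open Real

-- `S(ε) = ‖K_r‖²` for `r = e^{-ε}` in `H²(β)` with `β_n = e^{-√n}`.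
noncomputable def kernelNormSq (ε : ℝ) : ℝ :=
  ∑' n : ℕ, exp (-2 * n * ε) * exp (√n)

lemma sqrt_le_add_sq_div {a x : ℝ} (ha : 0 < a) (hx : 0 ≤ x) : √x ≤ (x + a ^ 2) / (2 * a) := by
  rw [sqrt_le_left (by positivity), div_pow, le_div_iff₀ (by positivity)]
  nlinarith [sq_nonneg (x - a ^ 2)]

lemma div_two_le_one_sub_exp_neg {δ : ℝ} (hδ : 0 ≤ δ) (hδ₁ : δ ≤ 1) : δ / 2 ≤ 1 - exp (-δ) := by
  have h : exp (-δ) * (1 + δ) ≤ 1 :=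
    calc exp (-δ) * (1 + δ) ≤ exp (-δ) * exp δ := by gcongr; linarith [add_one_le_exp δ]
      _ = 1 := by rw [← exp_add, neg_add_cancel, exp_zero]
  nlinarith [exp_pos (-δ)]

lemma exp_neg_mul_le_pow {δ x : ℝ} (hδ : 0 ≤ δ) {k : ℕ} (hk : k ≤ x) :
    exp (-(δ * x)) ≤ exp (-δ) ^ k := by
  rw [← exp_nat_mul, exp_le_exp]
  nlinarith

lemma summable_exp_neg_mul_abs_sub {δ : ℝ} (hδ : 0 < δ) (c : ℝ) :
    Summable fun n : ℕ => exp (-(δ * |n - c|)) := by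
  have hr : exp (-δ) < 1 := exp_lt_one_iff.mpr (neg_lt_zero.mpr hδ)
  refine .of_nonneg_of_le (fun n => by positivity) (fun n => ?_)
    ((summable_geometric_of_lt_one (exp_pos _).le hr).mul_left (exp (δ * |c|)))
  calc exp (-(δ * |n - c|)) = exp (δ * |c|) * exp (-(δ * (|n - c| + |c|))) := by
        rw [← exp_add]; ring_nf
    _ ≤ exp (δ * |c|) * exp (-δ) ^ n := by
        gcongr
        exact exp_neg_mul_le_pow hδ.le (by linarith [le_abs_self c, le_abs_self ((n : ℝ) - c)])

lemma tsum_exp_neg_mul_abs_sub_le {δ : ℝ} (hδ : 0 < δ) (hδ₁ : δ ≤ 1) (c : ℝ) :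
    ∑' n : ℕ, exp (-(δ * |n - c|)) ≤ 8 / δ := by
  set r := exp (-δ)
  have hr : r < 1 := exp_lt_one_iff.mpr (neg_lt_zero.mpr hδ)
  have hgeom := summable_geometric_of_lt_one (exp_pos _).le hr
  set m := ⌊c⌋₊
  have hm : c < m + 1 := Nat.lt_floor_add_one c
  have hhead : ∑ n ∈ Finset.range m, exp (-(δ * |n - c|)) ≤ (1 - r)⁻¹ := by
    rw [← Finset.sum_range_reflect, ← tsum_geometric_of_lt_one (exp_pos _).le hr]
    refine (Finset.sum_le_sum fun j hj => exp_neg_mul_le_pow hδ.le ?_).trans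
      (hgeom.sum_le_tsum _ fun _ _ => by positivity)
    have hjm : j + 1 ≤ m := Finset.mem_range.mp hj
    have hmc : (m : ℝ) ≤ c := Nat.floor_le (by linarith [Nat.floor_pos.mp (by omega : 0 < m)])
    rw [Nat.cast_sub (by omega), Nat.cast_sub (by omega)]
    push_cast
    linarith [neg_le_abs ((((m : ℕ) : ℝ) - 1 - j) - c)]
  have htail : ∑' k : ℕ, exp (-(δ * |(k + m : ℕ) - c|)) ≤ exp δ * (1 - r)⁻¹ := by
    rw [← tsum_geometric_of_lt_one (exp_pos _).le hr, ← tsum_mul_left]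
    refine (summable_exp_neg_mul_abs_sub hδ c).comp_injective (add_left_injective m)
      |>.tsum_le_tsum (fun k => ?_) (hgeom.mul_left _)
    calc exp (-(δ * |(k + m : ℕ) - c|)) = exp δ * exp (-(δ * (|(k + m : ℕ) - c| + 1))) := by
          rw [← exp_add]; ring_nf
      _ ≤ exp δ * r ^ k := by
          gcongr
          refine exp_neg_mul_le_pow hδ.le ?_
          push_cast
          linarith [le_abs_self ((k : ℝ) + m - c)]
  have hinv : (1 - r)⁻¹ ≤ 2 / δ := by
    rw [inv_le_comm₀ (by linarith) (by positivity), inv_div]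
    exact div_two_le_one_sub_exp_neg hδ.le hδ₁
  have hexp : exp δ ≤ 3 := by
    linarith [exp_le_exp.mpr hδ₁, exp_one_lt_d9]
  rw [← (summable_exp_neg_mul_abs_sub hδ c).sum_add_tsum_nat_add m]
  calc _ ≤ (1 - r)⁻¹ + exp δ * (1 - r)⁻¹ := add_le_add hhead htail
    _ ≤ 2 / δ + 3 * (2 / δ) := by gcongr
    _ = 8 / δ := by ring

lemma natFloor_mul_le_tsum {f : ℕ → ℝ} (hf : Summable f) (hf₀ : ∀ n, 0 ≤ f n)
    {x L b : ℝ} (hx : 0 ≤ x) (hb : ∀ n : ℕ, x ≤ n → n ≤ x + L → b ≤ f n) :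
    ⌊L⌋₊ * b ≤ ∑' n, f n := by
  set s := Finset.Ico ⌈x⌉₊ (⌈x⌉₊ + ⌊L⌋₊)
  have hcard : s.card = ⌊L⌋₊ := by simp [s]
  have hs : ∀ n ∈ s, b ≤ f n := by
    intro n hn
    obtain ⟨hlo, hhi⟩ := Finset.mem_Ico.mp hn
    have hceil := Nat.ceil_lt_add_one hx
    have hfloor : (⌊L⌋₊ : ℝ) ≤ L :=
      Nat.floor_le (by linarith [Nat.floor_pos.mp (by omega : 0 < ⌊L⌋₊)])
    refine hb n (Nat.ceil_le.mp hlo) ?_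
    have : (n : ℝ) + 1 ≤ ⌈x⌉₊ + ⌊L⌋₊ := by exact_mod_cast hhi
    linarith
  calc (⌊L⌋₊ : ℝ) * b = s.card • b := by rw [hcard, nsmul_eq_mul]
    _ ≤ ∑ n ∈ s, f n := s.card_nsmul_le_sum _ _ hs
    _ ≤ ∑' n, f n := hf.sum_le_tsum _ (fun n _ => hf₀ n)

lemma sub_two_mul_mul_sq_eq {ε : ℝ} (hε : ε ≠ 0) (s : ℝ) :
    s - 2 * ε * s ^ 2 = 1 / (8 * ε) - 2 * ε * (s - 1 / (4 * ε)) ^ 2 := by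
  field_simp
  ring

lemma exp_neg_two_mul_mul_exp_sqrt {ε x : ℝ} (hε : ε ≠ 0) (hx : 0 ≤ x) :
    exp (-2 * x * ε) * exp (√x) =
      exp (1 / (8 * ε)) * exp (-(2 * ε * (√x - 1 / (4 * ε)) ^ 2)) := by
  rw [← exp_add, ← exp_add, ← sub_eq_add_neg, ← sub_two_mul_mul_sq_eq hε, sq_sqrt hx]
  ring_nf

lemma mul_abs_sq_sub_sq_le {ε s : ℝ} (hε : 0 < ε) (hε₁ : ε ≤ 1 / 16) (hs : 0 ≤ s) :
    4 * (ε * √ε) * |s ^ 2 - (1 / (4 * ε)) ^ 2| ≤ 2 * ε * (s - 1 / (4 * ε)) ^ 2 + 1 := by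
  set a := 1 / (4 * ε)
  set t := √ε
  set d := |s - a|
  have ht : 0 < t := sqrt_pos.mpr hε
  have htt : t ^ 2 = ε := sq_sqrt hε.le
  have ht₁ : t ≤ 1 / 4 := by nlinarith
  have ha : 0 < a := by positivity
  have hta : 4 * t ^ 3 * (2 * a) = 2 * t := by
    simp only [a, ← htt]; field_simp
  have hfactor : |s ^ 2 - a ^ 2| = (s + a) * d := by
    rw [sq_sub_sq, abs_mul, abs_of_nonneg (by positivity : 0 ≤ s + a)]
  have hsa : s + a ≤ d + 2 * a := by linarith [le_abs_self (s - a)]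
  have hd : 0 ≤ d := abs_nonneg _
  have hcubic : 4 * t ^ 3 ≤ t ^ 2 := by nlinarith
  calc 4 * (ε * t) * |s ^ 2 - a ^ 2| = 4 * t ^ 3 * d * (s + a) := by
        rw [hfactor, ← htt]; ring
    _ ≤ 4 * t ^ 3 * d * (d + 2 * a) := by gcongr
    _ = 4 * t ^ 3 * d ^ 2 + 2 * t * d := by rw [← hta]; ring
    _ ≤ t ^ 2 * d ^ 2 + 2 * t * d := by gcongr
    _ ≤ 2 * t ^ 2 * d ^ 2 + 1 := by nlinarith [sq_nonneg (t * d - 1)]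
    _ = 2 * ε * (s - a) ^ 2 + 1 := by rw [← htt, sq_abs]

lemma two_mul_sq_sqrt_sub_le {ε x L : ℝ} (hε : 0 < ε) (hx : (1 / (4 * ε)) ^ 2 ≤ x)
    (hxL : x ≤ (1 / (4 * ε)) ^ 2 + L) :
    2 * ε * (√x - 1 / (4 * ε)) ^ 2 ≤ 8 * ε ^ 3 * L ^ 2 := by
  set a := 1 / (4 * ε)
  have ha : 0 < a := by positivity
  have hlo : 0 ≤ √x - a := by
    rw [sub_nonneg, ← sqrt_sq ha.le]; exact sqrt_le_sqrt hx
  have hhi : √x - a ≤ 2 * ε * L :=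
    calc √x - a ≤ (x + a ^ 2) / (2 * a) - a := by
          gcongr; exact sqrt_le_add_sq_div ha (le_trans (sq_nonneg a) hx)
      _ = 2 * ε * (x - a ^ 2) := by simp only [a]; field_simp; ring
      _ ≤ 2 * ε * L := by gcongr; linarith
  calc 2 * ε * (√x - a) ^ 2 ≤ 2 * ε * (2 * ε * L) ^ 2 := by gcongr
    _ = 8 * ε ^ 3 * L ^ 2 := by ring

lemma summable_exp_neg_two_mul_mul_exp_sqrt {ε : ℝ} (hε : 0 < ε) :
    Summable fun n : ℕ => exp (-2 * n * ε) * exp (√n) := by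
  have hr : exp (-ε) < 1 := exp_lt_one_iff.mpr (neg_lt_zero.mpr hε)
  refine .of_nonneg_of_le (fun n => by positivity) (fun n => ?_)
    ((summable_geometric_of_lt_one (exp_pos _).le hr).mul_left (exp (1 / (4 * ε))))
  have htangent := sqrt_le_add_sq_div (show 0 < 1 / (2 * ε) by positivity) n.cast_nonneg
  rw [← exp_add, ← exp_nat_mul, ← exp_add, exp_le_exp]
  calc -2 * n * ε + √n ≤ -2 * n * ε + (n + (1 / (2 * ε)) ^ 2) / (2 * (1 / (2 * ε))) := by
        gcongr
    _ = 1 / (4 * ε) + n * -ε := by field_simp; ring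

lemma kernelNormSq_le {ε : ℝ} (hε : 0 < ε) (hε₁ : ε ≤ 1 / 16) :
    kernelNormSq ε ≤ 2 * exp 1 * (ε * √ε)⁻¹ * exp (1 / (8 * ε)) := by
  set δ := 4 * (ε * √ε)
  have hδ : 0 < δ := by positivity
  have hδ₁ : δ ≤ 1 := by nlinarith [sq_sqrt hε.le, sqrt_nonneg ε]
  have hterm (n : ℕ) : exp (-2 * n * ε) * exp (√n) ≤
      exp (1 / (8 * ε)) * exp 1 * exp (-(δ * |n - (1 / (4 * ε)) ^ 2|)) := by
    have htilt := mul_abs_sq_sub_sq_le hε hε₁ (sqrt_nonneg (n : ℝ))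
    rw [sq_sqrt n.cast_nonneg] at htilt
    rw [exp_neg_two_mul_mul_exp_sqrt hε.ne' n.cast_nonneg, mul_assoc (exp _) (exp 1),
      ← exp_add 1]
    gcongr
    linarith
  calc kernelNormSq ε
      ≤ ∑' n : ℕ, exp (1 / (8 * ε)) * exp 1 * exp (-(δ * |n - (1 / (4 * ε)) ^ 2|)) :=
        (summable_exp_neg_two_mul_mul_exp_sqrt hε).tsum_le_tsum hterm
          ((summable_exp_neg_mul_abs_sub hδ _).mul_left _)
    _ ≤ exp (1 / (8 * ε)) * exp 1 * (8 / δ) := by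
        rw [tsum_mul_left]; gcongr; exact tsum_exp_neg_mul_abs_sub_le hδ hδ₁ _
    _ = 2 * exp 1 * (ε * √ε)⁻¹ * exp (1 / (8 * ε)) := by simp only [δ]; field_simp; ring

lemma le_kernelNormSq {ε : ℝ} (hε : 0 < ε) (hε₁ : ε ≤ 1 / 16) :
    exp (-8) / 2 * (ε * √ε)⁻¹ * exp (1 / (8 * ε)) ≤ kernelNormSq ε := by
  set L := (ε * √ε)⁻¹
  have hL : 1 ≤ L :=
    one_le_inv₀ (by positivity) |>.mpr (by nlinarith [sq_sqrt hε.le, sqrt_nonneg ε])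
  have hεL : 8 * ε ^ 3 * L ^ 2 = 8 := by
    simp only [L]; field_simp; rw [sq_sqrt hε.le]
  have hterm (n : ℕ) (hlo : (1 / (4 * ε)) ^ 2 ≤ n) (hhi : n ≤ (1 / (4 * ε)) ^ 2 + L) :
      exp (1 / (8 * ε)) * exp (-8) ≤ exp (-2 * n * ε) * exp (√n) := by
    rw [exp_neg_two_mul_mul_exp_sqrt hε.ne' n.cast_nonneg]
    gcongr
    linarith [two_mul_sq_sqrt_sub_le hε hlo hhi]
  calc exp (-8) / 2 * L * exp (1 / (8 * ε)) = L / 2 * (exp (1 / (8 * ε)) * exp (-8)) := by ring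
    _ ≤ ⌊L⌋₊ * (exp (1 / (8 * ε)) * exp (-8)) := by gcongr; exact (Nat.div_two_lt_floor hL).le
    _ ≤ kernelNormSq ε :=
        natFloor_mul_le_tsum (summable_exp_neg_two_mul_mul_exp_sqrt hε) (fun n => by positivity)
          (sq_nonneg _) hterm

theorem stmt_14 :
    ∃ c C : ℝ, 0 < c ∧ 0 < C ∧ ∃ ε₀ : ℝ, 0 < ε₀ ∧
      ∀ ε : ℝ, 0 < ε → ε < ε₀ →
        c * ε ^ (-(3 / 2) : ℝ) * Real.exp (1 / (8 * ε)) ≤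
          (∑' n : ℕ, Real.exp (-2 * n * ε) * Real.exp (Real.sqrt n)) ∧
        (∑' n : ℕ, Real.exp (-2 * n * ε) * Real.exp (Real.sqrt n)) ≤
          C * ε ^ (-(3 / 2) : ℝ) * Real.exp (1 / (8 * ε)) := by
  refine ⟨exp (-8) / 2, 2 * exp 1, by positivity, by positivity, 1 / 16, by norm_num,
    fun ε hε hε₀ => ?_⟩
  have hrpow : ε ^ (-(3 / 2) : ℝ) = (ε * √ε)⁻¹ := by
    rw [rpow_neg hε.le, show (3 / 2 : ℝ) = 1 + 1 / 2 by norm_num, rpow_add hε, rpow_one,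
      sqrt_eq_rpow]
  rw [hrpow]
  exact ⟨le_kernelNormSq hε hε₀.le, kernelNormSq_le hε hε₀.le⟩
end
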